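/- Let C ⊆ S be a nonempty candidate set and let UB(C) be a natural number with UB(C) ≥ MinTotal(C). If for every guess g ∈ G there exists an integer i_g ≥ 1 such that V_{i_g}(g,C) ≥ UB(C), then UB(C) = MinTotal(C). -/
import Mathlib


/-!
Formalization of guessing games (Wordle-style), following the paper's definitions:
guesses `G`, secrets `S ⊆ G`, responses `R` with `|R| > 1`, affirmative response
`r* ∈ R`, and an answering function `a` with `a(g,s) = r* ↔ g = s`.
-/

structure GuessingGame (α ρ : Type*) [DecidableEq α] [DecidableEq ρ] where
  G : Finset α
  S : Finset α
  R : Finset ρ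
  rstar : ρ
  ans : α → α → ρ
  S_subset_G : S ⊆ G
  one_lt_card_R : 1 < R.card
  rstar_mem : rstar ∈ R
  ans_mem : ∀ g ∈ G, ∀ s ∈ S, ans g s ∈ R
  ans_eq_rstar_iff : ∀ g ∈ G, ∀ s ∈ S, (ans g s = rstar ↔ g = s)

namespace GuessingGame

variable {α ρ : Type*} [DecidableEq α] [DecidableEq ρ] (gm : GuessingGame α ρ)

/-- The split `C_{g,r} = {c ∈ C : a(g,c) = r}`. -/
def split (C : Finset α) (g : α) (r : ρ) : Finset α :=
  C.filter fun c => gm.ans g c = r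

/-- `nSplits(g,C) = |{r ∈ R : C_{g,r} ≠ ∅}|`. -/
def nSplits (g : α) (C : Finset α) : ℕ :=
  (gm.R.filter fun r => (gm.split C g r).Nonempty).card

/-- The useful guesses `UG(C)`: for `|C| > 1` the guesses `g ∈ G` with
`nSplits(g,C) ≠ 1`; for `|C| ≤ 1`, `UG(C) = C`. -/
def UG (C : Finset α) : Finset α :=
  if 1 < C.card then gm.G.filter fun g => gm.nSplits g C ≠ 1 else C

/-- `MaxSplits(C) = max_{g ∈ G} nSplits(g,C)`. -/
def MaxSplits (C : Finset α) : ℕ :=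
  gm.G.sup fun g => gm.nSplits g C

end GuessingGame

/-- `Bound(n,b)`: `Bound(0,b) = 0`, `Bound(n,1) = n(n+1)/2`, and for `n > 0`, `b > 1`,
`Bound(n,b) = Σ_{i=1}^{k} i·b^{i-1} + (k+1)·(n - (b^k - 1)/(b-1))` where
`k = ⌊log_b (n(b-1)+1)⌋`. -/
def Bound (n b : ℕ) : ℕ :=
  if n = 0 then 0
  else if b = 1 then n * (n + 1) / 2
  else
    (∑ i ∈ Finset.range (Nat.log b (n * (b - 1) + 1)), (i + 1) * b ^ i) +
      (Nat.log b (n * (b - 1) + 1) + 1) *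
        (n - (b ^ Nat.log b (n * (b - 1) + 1) - 1) / (b - 1))

namespace GuessingGame

variable {α ρ : Type*} [DecidableEq α] [DecidableEq ρ] (gm : GuessingGame α ρ)

/-- Fuel-based implementation of the well-founded recursion defining `MinTotal`:
`MinTotal(∅) = 0` and for nonempty `C`,
`MinTotal(C) = min_{g ∈ UG(C)} (|C| + Σ_{r ∈ R \ {r*}} MinTotal(C_{g,r}))`.
Fuel `|C|` suffices since for a useful guess every split is a proper subset of `C`. -/
noncomputable def MinTotalAux : ℕ → Finset α → ℕ
  | 0, _ => 0
  | n + 1, C =>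
    if C = ∅ then 0
    else
      sInf (↑((gm.UG C).image fun g =>
        C.card + ∑ r ∈ gm.R.erase gm.rstar, MinTotalAux n (gm.split C g r)) : Set ℕ)

/-- `MinTotal(C)`. -/
noncomputable def MinTotal (C : Finset α) : ℕ :=
  gm.MinTotalAux C.card C

/-- `V*(g,C) = |C| + Σ_{r ∈ R \ {r*}} MinTotal(C_{g,r})`. -/
noncomputable def Vstar (g : α) (C : Finset α) : ℕ :=
  C.card + ∑ r ∈ gm.R.erase gm.rstar, gm.MinTotal (gm.split C g r)

/-- The lower bounds `LB_i` (`i ≥ 1`; `LB 0` is junk):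
`LB_1(C) = Bound(|C|, MaxSplits(S))`, `LB_2(C) = Bound(|C|, MaxSplits(C))`, and for
`i ≥ 1`, `LB_{i+2}(∅) = 0` and `LB_{i+2}(C) = min_{g ∈ UG(C)} V_i(g,C)` for nonempty `C`,
where `V_i(g,C) = |C| + Σ_{r ∈ R \ {r*}} LB_i(C_{g,r})`. -/
noncomputable def LB : ℕ → Finset α → ℕ
  | 0, _ => 0
  | 1, C => Bound C.card (gm.MaxSplits gm.S)
  | 2, C => Bound C.card (gm.MaxSplits C)
  | n + 3, C =>
    if C = ∅ then 0
    else
      sInf (↑((gm.UG C).image fun g =>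
        C.card + ∑ r ∈ gm.R.erase gm.rstar, LB (n + 1) (gm.split C g r)) : Set ℕ)

/-- `V_i(g,C) = |C| + Σ_{r ∈ R \ {r*}} LB_i(C_{g,r})`. -/
noncomputable def V (i : ℕ) (g : α) (C : Finset α) : ℕ :=
  C.card + ∑ r ∈ gm.R.erase gm.rstar, gm.LB i (gm.split C g r)

end GuessingGame


section GameLemmas

open GuessingGame

variable {α ρ : Type*} [DecidableEq α] [DecidableEq ρ] (gm : GuessingGame α ρ)

lemma split_subset (C : Finset α) (g : α) (r : ρ) : gm.split C g r ⊆ C :=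
  Finset.filter_subset _ _

lemma split_subset_S {C : Finset α} (hCS : C ⊆ gm.S) (g : α) (r : ρ) :
    gm.split C g r ⊆ gm.S := (split_subset gm C g r).trans hCS

lemma mem_split {C : Finset α} {g c : α} {r : ρ} :
    c ∈ gm.split C g r ↔ c ∈ C ∧ gm.ans g c = r := by
  unfold GuessingGame.split; exact Finset.mem_filter

lemma nSplits_pos {C : Finset α} (hCS : C ⊆ gm.S) (hC : C.Nonempty) {g : α}
    (hg : g ∈ gm.G) : 1 ≤ gm.nSplits g C := by
  obtain ⟨c, hc⟩ := hC
  have hr : gm.ans g c ∈ gm.R := gm.ans_mem g hg c (hCS hc)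
  have hmem : gm.ans g c ∈ gm.R.filter fun r => (gm.split C g r).Nonempty :=
    Finset.mem_filter.2 ⟨hr, ⟨c, (mem_split gm).2 ⟨hc, rfl⟩⟩⟩
  exact Finset.card_pos.2 ⟨_, hmem⟩

lemma nSplits_two {C : Finset α} (hCS : C ⊆ gm.S) {c1 c2 : α} (h1 : c1 ∈ C) (h2 : c2 ∈ C)
    (hne : c1 ≠ c2) : 2 ≤ gm.nSplits c1 C := by
  have hg : c1 ∈ gm.G := gm.S_subset_G (hCS h1)
  have hr1 : gm.ans c1 c1 = gm.rstar := (gm.ans_eq_rstar_iff c1 hg c1 (hCS h1)).2 rfl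
  have hr2 : gm.ans c1 c2 ≠ gm.rstar := fun h =>
    hne ((gm.ans_eq_rstar_iff c1 hg c2 (hCS h2)).1 h)
  have hsub : ({gm.rstar, gm.ans c1 c2} : Finset ρ)
      ⊆ gm.R.filter fun r => (gm.split C c1 r).Nonempty := by
    intro r hr
    rcases Finset.mem_insert.1 hr with rfl | hr
    · exact Finset.mem_filter.2 ⟨gm.rstar_mem, ⟨c1, (mem_split gm).2 ⟨h1, hr1⟩⟩⟩
    · rw [Finset.mem_singleton] at hr
      subst hr
      exact Finset.mem_filter.2 ⟨gm.ans_mem c1 hg c2 (hCS h2),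
        ⟨c2, (mem_split gm).2 ⟨h2, rfl⟩⟩⟩
  have hcard : ({gm.rstar, gm.ans c1 c2} : Finset ρ).card = 2 :=
    Finset.card_pair (Ne.symm hr2)
  calc 2 = ({gm.rstar, gm.ans c1 c2} : Finset ρ).card := hcard.symm
    _ ≤ _ := Finset.card_le_card hsub

lemma nSplits_le_MaxSplits {g : α} (hg : g ∈ gm.G) (C : Finset α) :
    gm.nSplits g C ≤ gm.MaxSplits C := Finset.le_sup (f := fun g => gm.nSplits g C) hg

lemma MaxSplits_mono {C D : Finset α} (h : C ⊆ D) : gm.MaxSplits C ≤ gm.MaxSplits D := by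
  apply Finset.sup_mono_fun
  intro g _
  apply Finset.card_le_card
  intro r hr
  rw [Finset.mem_filter] at hr ⊢
  refine ⟨hr.1, ?_⟩
  obtain ⟨c, hc⟩ := hr.2
  rw [mem_split] at hc
  exact ⟨c, (mem_split gm).2 ⟨h hc.1, hc.2⟩⟩

lemma UG_subset_G {C : Finset α} (hCS : C ⊆ gm.S) : gm.UG C ⊆ gm.G := by
  unfold GuessingGame.UG
  split
  · exact Finset.filter_subset _ _
  · exact hCS.trans gm.S_subset_G

lemma UG_nonempty {C : Finset α} (hCS : C ⊆ gm.S) (hC : C.Nonempty) :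
    (gm.UG C).Nonempty := by
  unfold GuessingGame.UG
  split
  · rename_i h
    obtain ⟨c1, h1, c2, h2, hne⟩ := Finset.one_lt_card.1 h
    refine ⟨c1, Finset.mem_filter.2 ⟨gm.S_subset_G (hCS h1), ?_⟩⟩
    have := nSplits_two gm hCS h1 h2 hne
    omega
  · exact hC

lemma split_card_lt {C : Finset α} (hCS : C ⊆ gm.S) (hC : C.Nonempty) {g : α}
    (hg : g ∈ gm.UG C) {r : ρ} (hr : r ≠ gm.rstar) :
    (gm.split C g r).card < C.card := by
  rcases lt_or_ge 1 C.card with h2 | h1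
  · rw [GuessingGame.UG, if_pos h2, Finset.mem_filter] at hg
    obtain ⟨hgG, hns⟩ := hg
    have hpos := nSplits_pos gm hCS hC hgG
    have h2s : 1 < (gm.R.filter fun r => (gm.split C g r).Nonempty).card := by
      have : gm.nSplits g C = (gm.R.filter fun r => (gm.split C g r).Nonempty).card := rfl
      omega
    obtain ⟨r1, hr1, r2, hr2, hne⟩ := Finset.one_lt_card.1 h2s
    have hex : ∃ r', r' ≠ r ∧ (gm.split C g r').Nonempty := by
      rcases eq_or_ne r1 r with heq | h
      · exact ⟨r2, by rw [← heq]; exact hne.symm, (Finset.mem_filter.1 hr2).2⟩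
      · exact ⟨r1, h, (Finset.mem_filter.1 hr1).2⟩
    obtain ⟨r', hr'ne, c, hc⟩ := hex
    rw [mem_split] at hc
    apply Finset.card_lt_card
    rw [Finset.ssubset_iff_of_subset (split_subset gm C g r)]
    exact ⟨c, hc.1, fun hmem => hr'ne (by rw [mem_split] at hmem; rw [← hmem.2, hc.2])⟩
  · rw [GuessingGame.UG, if_neg (not_lt.2 h1)] at hg
    have hcard : C.card = 1 := le_antisymm h1 (Finset.card_pos.2 hC)
    have hempty : gm.split C g r = ∅ := by
      rw [Finset.eq_empty_iff_forall_notMem]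
      intro c hc
      rw [mem_split] at hc
      have hcg : g = c := by
        obtain ⟨x, hx⟩ := Finset.card_eq_one.1 hcard
        subst hx
        rw [Finset.mem_singleton] at hg
        have hcx := Finset.mem_singleton.1 hc.1
        rw [hg, hcx]
      have hstar := (gm.ans_eq_rstar_iff g (gm.S_subset_G (hCS hg)) c (hCS hc.1)).2 hcg
      exact hr (by rw [← hc.2, hstar])
    rw [hempty]
    simpa using Finset.card_pos.2 hC

end GameLemmas

section MTLemmas

open GuessingGame

variable {α ρ : Type*} [DecidableEq α] [DecidableEq ρ] (gm : GuessingGame α ρ)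

lemma MinTotalAux_empty (n : ℕ) : gm.MinTotalAux n ∅ = 0 := by
  cases n <;> simp [GuessingGame.MinTotalAux]

lemma MinTotalAux_congr : ∀ n : ℕ, ∀ {m : ℕ} {C : Finset α}, C ⊆ gm.S → C.card ≤ n →
    C.card ≤ m → gm.MinTotalAux n C = gm.MinTotalAux m C := by
  intro n
  induction n using Nat.strong_induction_on with
  | _ n ih =>
    intro m C hCS hn hm
    rcases Finset.eq_empty_or_nonempty C with rfl | hC
    · rw [MinTotalAux_empty, MinTotalAux_empty]
    have hpos : 1 ≤ C.card := Finset.card_pos.2 hC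
    obtain ⟨n', rfl⟩ : ∃ n', n = n' + 1 := ⟨n - 1, by omega⟩
    obtain ⟨m', rfl⟩ : ∃ m', m = m' + 1 := ⟨m - 1, by omega⟩
    have hne := Finset.nonempty_iff_ne_empty.1 hC
    simp only [GuessingGame.MinTotalAux, if_neg hne]
    have himg : ((gm.UG C).image fun g =>
          C.card + ∑ r ∈ gm.R.erase gm.rstar, gm.MinTotalAux n' (gm.split C g r))
        = ((gm.UG C).image fun g =>
          C.card + ∑ r ∈ gm.R.erase gm.rstar, gm.MinTotalAux m' (gm.split C g r)) := by
      apply Finset.image_congr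
      intro g hg
      rw [Finset.mem_coe] at hg
      dsimp only
      congr 1
      apply Finset.sum_congr rfl
      intro r hr
      have hrne : r ≠ gm.rstar := (Finset.mem_erase.1 hr).1
      have hlt := split_card_lt gm hCS hC hg hrne
      exact ih n' (by omega) (split_subset_S gm hCS g r) (by omega) (by omega)
    rw [himg]

lemma MinTotalAux_eq_MinTotal {n : ℕ} {C : Finset α} (hCS : C ⊆ gm.S) (hn : C.card ≤ n) :
    gm.MinTotalAux n C = gm.MinTotal C :=
  MinTotalAux_congr gm n hCS hn le_rfl

lemma MinTotal_spec {C : Finset α} (hCS : C ⊆ gm.S) (hC : C.Nonempty) :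
    ∃ g ∈ gm.UG C, gm.MinTotal C = gm.Vstar g C := by
  have hpos : 1 ≤ C.card := Finset.card_pos.2 hC
  obtain ⟨m, hm⟩ : ∃ m, C.card = m + 1 := ⟨C.card - 1, by omega⟩
  have hne := Finset.nonempty_iff_ne_empty.1 hC
  have hunf : gm.MinTotal C = sInf (↑((gm.UG C).image fun g =>
      C.card + ∑ r ∈ gm.R.erase gm.rstar, gm.MinTotalAux m (gm.split C g r)) : Set ℕ) := by
    rw [GuessingGame.MinTotal]
    conv_lhs => rw [hm]
    simp only [GuessingGame.MinTotalAux, if_neg hne]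
  have hnei : ((gm.UG C).image fun g =>
      C.card + ∑ r ∈ gm.R.erase gm.rstar, gm.MinTotalAux m (gm.split C g r)).Nonempty :=
    (UG_nonempty gm hCS hC).image _
  have hmem := Nat.sInf_mem ((Finset.coe_nonempty.2 hnei) : (↑((gm.UG C).image fun g =>
      C.card + ∑ r ∈ gm.R.erase gm.rstar, gm.MinTotalAux m (gm.split C g r)) : Set ℕ).Nonempty)
  rw [Finset.mem_coe, Finset.mem_image] at hmem
  obtain ⟨g, hgUG, hgeq⟩ := hmem
  refine ⟨g, hgUG, ?_⟩
  rw [hunf, ← hgeq, GuessingGame.Vstar]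
  congr 1
  apply Finset.sum_congr rfl
  intro r hr
  have hrne : r ≠ gm.rstar := (Finset.mem_erase.1 hr).1
  have hlt := split_card_lt gm hCS hC hgUG hrne
  exact MinTotalAux_eq_MinTotal gm (split_subset_S gm hCS g r) (by omega)

end MTLemmas

namespace GGAux

/-- number of tree slots of depth ≤ i with branching b: c 0 = 0, c (i+1) = b * c i + 1 -/
def cfun (b : ℕ) : ℕ → ℕ
  | 0 => 0
  | i + 1 => b * cfun b i + 1

lemma cfun_le_succ {b : ℕ} (hb : 1 ≤ b) (i : ℕ) : cfun b i ≤ cfun b (i + 1) := by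
  have := Nat.mul_le_mul_right (cfun b i) hb
  simpa [cfun] using Nat.le_succ_of_le (by simpa using this)

lemma cfun_mono {b : ℕ} (hb : 1 ≤ b) : Monotone (cfun b) :=
  monotone_nat_of_le_succ (cfun_le_succ hb)

lemma le_cfun {b : ℕ} (hb : 1 ≤ b) (i : ℕ) : i ≤ cfun b i := by
  induction i with
  | zero => simp [cfun]
  | succ n ih =>
    have : n + 1 ≤ cfun b n + 1 := by omega
    calc n + 1 ≤ cfun b n + 1 := this
    _ ≤ b * cfun b n + 1 := by
        have := Nat.mul_le_mul_right (cfun b n) hb; omega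
    _ = cfun b (n + 1) := rfl

/-- depth of slot m (1-indexed): least i with m ≤ cfun b i -/
noncomputable def Dep (b m : ℕ) : ℕ := sInf {i | m ≤ cfun b i}

lemma Dep_le_iff {b : ℕ} (hb : 1 ≤ b) {m d : ℕ} : Dep b m ≤ d ↔ m ≤ cfun b d := by
  constructor
  · intro h
    have hne : {i | m ≤ cfun b i}.Nonempty := ⟨m, le_cfun hb m⟩
    have hmem := Nat.sInf_mem hne
    exact le_trans hmem (cfun_mono hb h)
  · intro h
    exact Nat.sInf_le h

lemma cfun_lt_iff {b : ℕ} (hb : 1 ≤ b) {m i : ℕ} : cfun b i < m ↔ i < Dep b m := by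
  rw [← not_le, ← not_le, not_iff_not]
  exact (Dep_le_iff hb).symm

lemma Dep_le_self {b : ℕ} (hb : 1 ≤ b) (m : ℕ) : Dep b m ≤ m :=
  (Dep_le_iff hb).2 (le_cfun hb m)

/-- F n b = sum of depths of the n cheapest slots -/
noncomputable def Ffun (n b : ℕ) : ℕ := ∑ t ∈ Finset.range n, Dep b (t + 1)

lemma Dep_eq_card {b m K : ℕ} (hb : 1 ≤ b) (hK : m ≤ K) :
    Dep b m = ((Finset.range K).filter fun i => cfun b i < m).card := by
  have : (Finset.range K).filter (fun i => cfun b i < m) = Finset.range (Dep b m) := by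
    ext i
    simp only [Finset.mem_filter, Finset.mem_range]
    constructor
    · rintro ⟨_, h2⟩; exact (cfun_lt_iff hb).1 h2
    · intro h
      exact ⟨lt_of_lt_of_le h (le_trans (Dep_le_self hb m) hK), (cfun_lt_iff hb).2 h⟩
  rw [this, Finset.card_range]

lemma Ffun_eq {n b K : ℕ} (hb : 1 ≤ b) (hK : n ≤ K) :
    Ffun n b = ∑ i ∈ Finset.range K, (n - min (cfun b i) n) := by
  have h1 : ∀ t ∈ Finset.range n, Dep b (t + 1) =
      ∑ i ∈ Finset.range K, (if cfun b i < t + 1 then 1 else 0) := by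
    intro t ht
    rw [Dep_eq_card (K := K) hb (by simp only [Finset.mem_range] at ht; omega),
      Finset.card_filter]
  rw [Ffun, Finset.sum_congr rfl h1, Finset.sum_comm]
  refine Finset.sum_congr rfl fun i _ => ?_
  rw [← Finset.card_filter]
  have : (Finset.range n).filter (fun x => cfun b i < x + 1) = Finset.Ico (cfun b i) n := by
    ext x
    simp only [Finset.mem_filter, Finset.mem_range, Finset.mem_Ico]
    omega
  rw [this, Nat.card_Ico]
  omega

lemma F_rec {ρ : Type*} [DecidableEq ρ] (E : Finset ρ) (mm : ρ → ℕ) {b n ε : ℕ}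
    (hb : 2 ≤ b) (hsum : (∑ r ∈ E, mm r) + ε = n) (hε : ε ≤ 1)
    (hcount : (E.filter fun r => 0 < mm r).card + ε ≤ b) :
    Ffun n b ≤ n + ∑ r ∈ E, Ffun (mm r) b := by
  have hb1 : 1 ≤ b := by omega
  rcases Nat.eq_zero_or_pos n with hn0 | hn
  · simp [hn0, Ffun]
  -- key counting inequality
  have hstar : ∀ i : ℕ, ε + ∑ r ∈ E, min (cfun b i) (mm r) ≤ min (cfun b (i + 1)) n := by
    intro i
    rcases le_or_gt (cfun b (i + 1)) n with hle | hlt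
    · rw [min_eq_left hle]
      have h1 : ∑ r ∈ E, min (cfun b i) (mm r)
          = ∑ r ∈ E.filter (fun r => 0 < mm r), min (cfun b i) (mm r) := by
        rw [Finset.sum_filter_of_ne]
        intro x _ hx
        by_contra h
        simp only [not_lt, Nat.le_zero] at h
        simp [h] at hx
      have h2 : ∑ r ∈ E.filter (fun r => 0 < mm r), min (cfun b i) (mm r)
          ≤ (E.filter (fun r => 0 < mm r)).card * cfun b i := by
        apply Finset.sum_le_card_nsmul
        intro x _
        exact min_le_left _ _
      set K := (E.filter (fun r => 0 < mm r)).card with hK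
      have hmul : (K + ε) * cfun b i ≤ b * cfun b i :=
        Nat.mul_le_mul_right _ hcount
      rw [add_mul] at hmul
      show ε + ∑ r ∈ E, min (cfun b i) (mm r) ≤ cfun b (i + 1)
      rw [show cfun b (i + 1) = b * cfun b i + 1 from rfl]
      rcases Nat.eq_zero_or_pos (cfun b i) with hc0 | hcpos
      · rw [h1] at *
        have : ∑ r ∈ E.filter (fun r => 0 < mm r), min (cfun b i) (mm r) ≤ K * cfun b i := h2
        omega
      · have hεle : ε ≤ ε * cfun b i := Nat.le_mul_of_pos_right ε hcpos
        rw [h1]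
        omega
    · rw [min_eq_right (le_of_lt hlt)]
      have : ∑ r ∈ E, min (cfun b i) (mm r) ≤ ∑ r ∈ E, mm r :=
        Finset.sum_le_sum fun r _ => min_le_right _ _
      omega
  -- expand Ffun with K = n
  have hmr : ∀ r ∈ E, mm r ≤ n := by
    intro r hr
    have := Finset.single_le_sum (f := mm) (fun r _ => Nat.zero_le _) hr
    omega
  rw [Ffun_eq hb1 (le_refl n)]
  have hR : ∀ r ∈ E, Ffun (mm r) b = ∑ i ∈ Finset.range n, (mm r - min (cfun b i) (mm r)) :=
    fun r hr => Ffun_eq hb1 (hmr r hr)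
  rw [Finset.sum_congr rfl hR, Finset.sum_comm]
  -- split off i = 0 on the left
  obtain ⟨p, rfl⟩ : ∃ p, n = p + 1 := ⟨n - 1, by omega⟩
  rw [Finset.sum_range_succ']
  have hzero : p + 1 - min (cfun b 0) (p + 1) = p + 1 := by
    have : cfun b 0 = 0 := rfl
    simp [this]
  rw [hzero]
  have hdrop : ∑ i ∈ Finset.range p, (∑ r ∈ E, (mm r - min (cfun b i) (mm r)))
      ≤ ∑ i ∈ Finset.range (p + 1), (∑ r ∈ E, (mm r - min (cfun b i) (mm r))) := by
    apply Finset.sum_le_sum_of_subset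
    exact Finset.range_subset_range.2 (Nat.le_succ p)
  have hterm : ∀ i ∈ Finset.range p,
      (p + 1 - min (cfun b (i + 1)) (p + 1)) ≤ ∑ r ∈ E, (mm r - min (cfun b i) (mm r)) := by
    intro i _
    have h1 := hstar i
    have h2 : ∑ r ∈ E, mm r ≤ (∑ r ∈ E, (mm r - min (cfun b i) (mm r)))
        + ∑ r ∈ E, min (cfun b i) (mm r) := by
      rw [← Finset.sum_add_distrib]
      exact Finset.sum_le_sum fun r _ => by omega
    omega
  calc ∑ i ∈ Finset.range p, (p + 1 - min (cfun b (i + 1)) (p + 1)) + (p + 1)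
      ≤ ∑ i ∈ Finset.range p, (∑ r ∈ E, (mm r - min (cfun b i) (mm r))) + (p + 1) :=
        Nat.add_le_add_right (Finset.sum_le_sum hterm) _
    _ ≤ ∑ i ∈ Finset.range (p + 1), (∑ r ∈ E, (mm r - min (cfun b i) (mm r))) + (p + 1) :=
        Nat.add_le_add_right hdrop _
    _ = (p + 1) + ∑ i ∈ Finset.range (p + 1), (∑ r ∈ E, (mm r - min (cfun b i) (mm r))) := by
        omega

lemma cfun_mul {b : ℕ} (hb : 1 ≤ b) (k : ℕ) : (b - 1) * cfun b k + 1 = b ^ k := by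
  obtain ⟨m, rfl⟩ : ∃ m, b = m + 1 := ⟨b - 1, by omega⟩
  simp only [Nat.add_sub_cancel]
  induction k with
  | zero => simp [cfun]
  | succ n ih =>
    have h1 : cfun (m + 1) (n + 1) = (m + 1) * cfun (m + 1) n + 1 := rfl
    have h2 : m * ((m + 1) * cfun (m + 1) n + 1) + 1
        = (m + 1) * (m * cfun (m + 1) n + 1) := by ring
    rw [h1, h2, ih, pow_succ, mul_comm]

lemma Dep_of_between {b : ℕ} (hb : 1 ≤ b) {k t : ℕ} (h1 : cfun b k < t)
    (h2 : t ≤ cfun b (k + 1)) : Dep b t = k + 1 :=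
  le_antisymm ((Dep_le_iff hb).2 h2) ((cfun_lt_iff hb).1 h1)

lemma sum_Dep_chunk {b : ℕ} (hb : 1 ≤ b) (k : ℕ) :
    ∑ t ∈ Finset.range (cfun b k), Dep b (t + 1) = ∑ i ∈ Finset.range k, (i + 1) * b ^ i := by
  induction k with
  | zero => simp [cfun]
  | succ n ih =>
    rw [Finset.range_eq_Ico,
      ← Finset.sum_Ico_consecutive _ (Nat.zero_le (cfun b n)) (cfun_le_succ hb n),
      ← Finset.range_eq_Ico, ih, Finset.sum_range_succ]
    congr 1
    have hcongr : ∀ t ∈ Finset.Ico (cfun b n) (cfun b (n + 1)), Dep b (t + 1) = n + 1 := by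
      intro t ht
      rw [Finset.mem_Ico] at ht
      exact Dep_of_between hb (by omega) (by omega)
    rw [Finset.sum_congr rfl hcongr, Finset.sum_const, Nat.card_Ico, smul_eq_mul]
    have h1 : cfun b (n + 1) = b * cfun b n + 1 := rfl
    have h2 : (b - 1) * cfun b n + 1 = b ^ n := cfun_mul hb n
    have h3 : (b - 1) * cfun b n = b * cfun b n - cfun b n := by
      rw [Nat.sub_mul, one_mul]
    have hle : cfun b n ≤ b * cfun b n := Nat.le_mul_of_pos_left _ (by omega)
    have h4 : cfun b (n + 1) - cfun b n = b ^ n := by omega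
    rw [h4, mul_comm]

lemma cfun_one (i : ℕ) : cfun 1 i = i := by
  induction i with
  | zero => rfl
  | succ n ih => show 1 * cfun 1 n + 1 = n + 1; rw [ih]; omega

lemma Bound_le_F {n b : ℕ} (hb : 1 ≤ b) : Bound n b ≤ Ffun n b := by
  rcases Nat.eq_zero_or_pos n with rfl | hn
  · simp [Bound]
  rcases eq_or_lt_of_le hb with hb1 | hb2
  · -- b = 1
    subst hb1
    have hdep : ∀ t, Dep 1 (t + 1) = t + 1 := by
      intro t
      refine le_antisymm ((Dep_le_iff le_rfl).2 (by rw [cfun_one])) ?_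
      have := (Dep_le_iff (le_refl 1) (m := t + 1) (d := Dep 1 (t + 1))).1 le_rfl
      rwa [cfun_one] at this
    have hF : Ffun n 1 = ∑ t ∈ Finset.range n, (t + 1) := by
      unfold Ffun; exact Finset.sum_congr rfl fun t _ => hdep t
    have hsum : (∑ t ∈ Finset.range n, (t + 1)) * 2 = n * (n + 1) := by
      have h0 : ∑ i ∈ Finset.range (n + 1), i = ∑ t ∈ Finset.range n, (t + 1) := by
        rw [Finset.sum_range_succ']; simp
      have := Finset.sum_range_id_mul_two (n + 1)
      rw [h0] at this
      simpa [Nat.add_sub_cancel, mul_comm] using this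
    have hB : Bound n 1 = n * (n + 1) / 2 := by
      unfold Bound; rw [if_neg (by omega), if_pos rfl]
    rw [hB, hF]
    omega
  · -- 2 ≤ b
    have hb2' : 2 ≤ b := hb2
    set k := Nat.log b (n * (b - 1) + 1) with hk
    have hne : n * (b - 1) + 1 ≠ 0 := by omega
    have hpow1 : b ^ k ≤ n * (b - 1) + 1 := Nat.pow_log_le_self b hne
    have hpow2 : n * (b - 1) + 1 < b ^ (k + 1) := Nat.lt_pow_succ_log_self hb2' _
    have hmulk := cfun_mul hb k
    have hmulk1 := cfun_mul hb (k + 1)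
    have hck : cfun b k ≤ n := by
      have h1 : (b - 1) * cfun b k ≤ (b - 1) * n := by
        rw [mul_comm n (b - 1)] at hpow1; omega
      exact Nat.le_of_mul_le_mul_left h1 (by omega)
    have hck2 : n < cfun b (k + 1) := by
      have h1 : (b - 1) * n < (b - 1) * cfun b (k + 1) := by
        rw [mul_comm n (b - 1)] at hpow2; omega
      exact Nat.lt_of_mul_lt_mul_left h1
    have hdiv : (b ^ k - 1) / (b - 1) = cfun b k := by
      have h1 : b ^ k - 1 = (b - 1) * cfun b k := by omega
      rw [h1, Nat.mul_div_cancel_left _ (show 0 < b - 1 by omega)]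
    have hB : Bound n b = (∑ i ∈ Finset.range k, (i + 1) * b ^ i) + (k + 1) * (n - cfun b k) := by
      unfold Bound
      rw [if_neg (by omega), if_neg (by omega), ← hk, hdiv]
    have hF : Ffun n b = (∑ i ∈ Finset.range k, (i + 1) * b ^ i) + (n - cfun b k) * (k + 1) := by
      unfold Ffun
      rw [Finset.range_eq_Ico, ← Finset.sum_Ico_consecutive _ (Nat.zero_le (cfun b k)) hck,
        ← Finset.range_eq_Ico, sum_Dep_chunk hb k]
      congr 1
      have hcongr : ∀ t ∈ Finset.Ico (cfun b k) n, Dep b (t + 1) = k + 1 := by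
        intro t ht
        rw [Finset.mem_Ico] at ht
        exact Dep_of_between hb (by omega) (by omega)
      rw [Finset.sum_congr rfl hcongr, Finset.sum_const, Nat.card_Ico, smul_eq_mul]
    rw [hB, hF, mul_comm]

end GGAux

section MainLemmas

open GuessingGame GGAux

variable {α ρ : Type*} [DecidableEq α] [DecidableEq ρ] (gm : GuessingGame α ρ)

lemma Ffun_le_MinTotal : ∀ n : ℕ, ∀ C : Finset α, C ⊆ gm.S → C.card ≤ n →
    ∀ b : ℕ, gm.MaxSplits C ≤ b → Ffun C.card b ≤ gm.MinTotal C := by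
  intro n
  induction n with
  | zero =>
    intro C hCS hcard b hb
    have h0 : C.card = 0 := by omega
    rw [h0]
    simp [Ffun]
  | succ n ih =>
    intro C hCS hcard b hb
    rcases Finset.eq_empty_or_nonempty C with rfl | hC
    · simp [Ffun]
    obtain ⟨g, hgUG, hMT⟩ := MinTotal_spec gm hCS hC
    have hgG : g ∈ gm.G := UG_subset_G gm hCS hgUG
    rcases lt_or_ge C.card 2 with hlt2 | hge2
    · -- |C| = 1
      have hc1 : C.card = 1 := by have := Finset.card_pos.2 hC; omega
      have hb1 : 1 ≤ b :=
        le_trans (le_trans (nSplits_pos gm hCS hC hgG) (nSplits_le_MaxSplits gm hgG C)) hb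
      have hFf : Ffun 1 b = 1 := by
        rw [Ffun, Finset.sum_range_one]
        refine le_antisymm ((Dep_le_iff hb1).2 ?_) ((cfun_lt_iff hb1).1 ?_)
        · show 1 ≤ b * cfun b 0 + 1
          omega
        · show cfun b 0 < 1
          simp [cfun]
      rw [hc1, hFf, hMT, GuessingGame.Vstar]
      omega
    · -- |C| ≥ 2
      have hb2 : 2 ≤ b := by
        obtain ⟨c1, h1, c2, h2, hne12⟩ := Finset.one_lt_card.1 hge2
        have hg1 : c1 ∈ gm.G := gm.S_subset_G (hCS h1)
        exact le_trans (le_trans (nSplits_two gm hCS h1 h2 hne12)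
          (nSplits_le_MaxSplits gm hg1 C)) hb
      set mr : ρ → ℕ := fun r => (gm.split C g r).card with hmr
      have hfib : C.card = ∑ r ∈ gm.R, (gm.split C g r).card :=
        Finset.card_eq_sum_card_fiberwise fun c hc => gm.ans_mem g hgG c (hCS hc)
      have hrstar : (gm.split C g gm.rstar).card ≤ 1 := by
        have hsub : gm.split C g gm.rstar ⊆ {g} := by
          intro c hc
          rw [mem_split] at hc
          rw [Finset.mem_singleton]
          exact ((gm.ans_eq_rstar_iff g hgG c (hCS hc.1)).1 hc.2).symm
        simpa using Finset.card_le_card hsub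
      have hsum : (∑ r ∈ gm.R.erase gm.rstar, mr r) + (gm.split C g gm.rstar).card = C.card := by
        rw [hfib]
        exact Finset.sum_erase_add _ _ gm.rstar_mem
      have hcount : ((gm.R.erase gm.rstar).filter fun r => 0 < mr r).card
          + (gm.split C g gm.rstar).card ≤ b := by
        have hnb : gm.nSplits g C ≤ b := le_trans (nSplits_le_MaxSplits gm hgG C) hb
        have hnsdef : gm.nSplits g C
            = (gm.R.filter fun r => (gm.split C g r).Nonempty).card := rfl
        have hsub : ((gm.R.erase gm.rstar).filter fun r => 0 < mr r)
            ⊆ (gm.R.filter fun r => (gm.split C g r).Nonempty).erase gm.rstar := by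
          intro r hrm
          rw [Finset.mem_filter, Finset.mem_erase] at hrm
          rw [Finset.mem_erase, Finset.mem_filter]
          exact ⟨hrm.1.1, hrm.1.2, Finset.card_pos.1 hrm.2⟩
        have hcle := Finset.card_le_card hsub
        rcases Nat.eq_zero_or_pos (gm.split C g gm.rstar).card with hz | hp
        · have := Finset.card_le_card
            (Finset.erase_subset gm.rstar (gm.R.filter fun r => (gm.split C g r).Nonempty))
          omega
        · have hmemf : gm.rstar ∈ gm.R.filter fun r => (gm.split C g r).Nonempty :=
            Finset.mem_filter.2 ⟨gm.rstar_mem, Finset.card_pos.1 hp⟩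
          have hcerase := Finset.card_erase_of_mem hmemf
          have hcpos := Finset.card_pos.2 ⟨gm.rstar, hmemf⟩
          omega
      have hrec := F_rec (gm.R.erase gm.rstar) mr hb2 hsum hrstar hcount
      refine le_trans hrec ?_
      rw [hMT, GuessingGame.Vstar]
      apply Nat.add_le_add_left
      apply Finset.sum_le_sum
      intro r hr
      have hrne : r ≠ gm.rstar := (Finset.mem_erase.1 hr).1
      have hlt := split_card_lt gm hCS hC hgUG hrne
      exact ih (gm.split C g r) (split_subset_S gm hCS g r) (by omega) b
        (le_trans (MaxSplits_mono gm (split_subset gm C g r)) hb)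

lemma LB_le_MinTotal : ∀ i : ℕ, 1 ≤ i → ∀ C : Finset α, C ⊆ gm.S →
    gm.LB i C ≤ gm.MinTotal C := by
  intro i
  induction i using Nat.strong_induction_on with
  | _ i ih =>
    intro hi C hCS
    rcases Finset.eq_empty_or_nonempty C with rfl | hC
    · match i, hi with
      | 1, _ => simp [GuessingGame.LB, Bound]
      | 2, _ => simp [GuessingGame.LB, Bound]
      | (k+3), _ => simp [GuessingGame.LB]
    have hS : C.Nonempty := hC
    have hb1C : 1 ≤ gm.MaxSplits C := by
      obtain ⟨c, hc⟩ := hS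
      exact le_trans (nSplits_pos gm hCS hC (gm.S_subset_G (hCS hc)))
        (nSplits_le_MaxSplits gm (gm.S_subset_G (hCS hc)) C)
    have hb1S : 1 ≤ gm.MaxSplits gm.S :=
      le_trans hb1C (MaxSplits_mono gm hCS)
    match i, hi with
    | 1, _ =>
      calc gm.LB 1 C = Bound C.card (gm.MaxSplits gm.S) := rfl
        _ ≤ Ffun C.card (gm.MaxSplits gm.S) := Bound_le_F hb1S
        _ ≤ gm.MinTotal C :=
          Ffun_le_MinTotal gm C.card C hCS le_rfl _ (MaxSplits_mono gm hCS)
    | 2, _ =>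
      calc gm.LB 2 C = Bound C.card (gm.MaxSplits C) := rfl
        _ ≤ Ffun C.card (gm.MaxSplits C) := Bound_le_F hb1C
        _ ≤ gm.MinTotal C := Ffun_le_MinTotal gm C.card C hCS le_rfl _ le_rfl
    | (k+3), _ =>
      obtain ⟨g, hgUG, hMT⟩ := MinTotal_spec gm hCS hC
      have hne := Finset.nonempty_iff_ne_empty.1 hC
      have hle : gm.LB (k+3) C
          ≤ C.card + ∑ r ∈ gm.R.erase gm.rstar, gm.LB (k+1) (gm.split C g r) := by
        have hunf : gm.LB (k+3) C = sInf (↑((gm.UG C).image fun g =>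
            C.card + ∑ r ∈ gm.R.erase gm.rstar, gm.LB (k+1) (gm.split C g r)) : Set ℕ) := by
          simp only [GuessingGame.LB, if_neg hne]
        rw [hunf]
        exact Nat.sInf_le (Finset.mem_coe.2 (Finset.mem_image_of_mem _ hgUG))
      refine le_trans hle ?_
      rw [hMT, GuessingGame.Vstar]
      apply Nat.add_le_add_left
      apply Finset.sum_le_sum
      intro r hr
      exact ih (k+1) (by omega) (by omega) _ (split_subset_S gm hCS g r)

end MainLemmas

section Statements

open GuessingGame

variable {α ρ : Type*} [DecidableEq α] [DecidableEq ρ]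

theorem statement_19 (gm : GuessingGame α ρ) (C : Finset α) (hCS : C ⊆ gm.S)
    (hC : C.Nonempty) (UB : ℕ) (hUB : gm.MinTotal C ≤ UB)
    (h : ∀ g ∈ gm.G, ∃ i : ℕ, 1 ≤ i ∧ UB ≤ gm.V i g C) :
    UB = gm.MinTotal C := by
  obtain ⟨g, hgUG, hMT⟩ := MinTotal_spec gm hCS hC
  have hgG : g ∈ gm.G := UG_subset_G gm hCS hgUG
  obtain ⟨i, hi1, hiV⟩ := h g hgG
  have hVle : gm.V i g C ≤ gm.Vstar g C := by
    rw [GuessingGame.V, GuessingGame.Vstar]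
    exact Nat.add_le_add_left (Finset.sum_le_sum fun r hr =>
      LB_le_MinTotal gm i hi1 _ (split_subset_S gm hCS g r)) _
  refine le_antisymm ?_ hUB
  rw [hMT]
  exact le_trans hiV hVle

end Statements
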